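/- arXiv:1402.4751 — 5 statements merged into one kernel-verified Lean document; each statement's English description precedes it below -/
import Mathlib

section
/- Let 1<p<2 and τ>0. There exists a unique c ∈ (-1,1) such that the cubic v(t) = -(1+τ²)²(p-1)t³ + (1+τ²)(3τ²+τ²p+3-3p)t² + (2τ²p-9τ⁴+τ⁴p+3-3p-6τ²)t - p + 5τ⁴ + 2τ²p - τ⁴p - 10τ² + 1 satisfies v(c)=0, v>0 on [-1,c) and v<0 on (c,1]. -/
/-!
Write `v(t) = A t³ + B t² + C t + D`. Then `v(-1) = 16τ⁴ > 0`, `v(1) = 8(1 - p - τ²) < 0` and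
`A = -(1+τ²)²(p-1) < 0`. If `3A + B = 2(1+τ²)((3-p)τ² - 3(p-1)) ≥ 0`, then `v'' = 6At + 2B ≥ 0`
on `(-∞, 1]`, so `v` is convex there. Otherwise `B² - 3AC = 4τ²(1+τ²)²(τ²(3-p)² - 9(p-1)) < 0`,
so `v'` has no real root and `v` is strictly decreasing. Either shape forces a single sign change
from `+` to `-` on `[-1, 1]`.
-/

open Set

def SignChangeAt (f : ℝ → ℝ) (a b c : ℝ) : Prop :=
  c ∈ Ioo a b ∧ f c = 0 ∧ (∀ t ∈ Ico a c, 0 < f t) ∧ (∀ t ∈ Ioc c b, f t < 0)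

section SignChange

variable {f : ℝ → ℝ} {a b c : ℝ}

theorem SignChangeAt.unique {c' : ℝ} (hc : SignChangeAt f a b c) (hc' : SignChangeAt f a b c') :
    c = c' := by
  obtain ⟨hcI, hc0, -, -⟩ := hc
  obtain ⟨hc'I, hc'0, hpos, hneg⟩ := hc'
  rcases lt_trichotomy c c' with h | h | h
  · exact absurd hc0 (hpos c ⟨hcI.1.le, h⟩).ne'
  · exact h
  · exact absurd hc0 (hneg c ⟨h, hcI.2.le⟩).ne

theorem signChangeAt_of_strictAntiOn (hf : StrictAntiOn f (Icc a b)) (hcI : c ∈ Ioo a b)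
    (hc0 : f c = 0) : SignChangeAt f a b c := by
  have hc : c ∈ Icc a b := Ioo_subset_Icc_self hcI
  refine ⟨hcI, hc0, fun t ht ↦ ?_, fun t ht ↦ ?_⟩
  · exact hc0 ▸ hf ⟨ht.1, ht.2.le.trans hc.2⟩ hc ht.2
  · exact hc0 ▸ hf hc ⟨hc.1.trans ht.1.le, ht.2⟩ ht.1

theorem signChangeAt_of_convexOn (hf : ConvexOn ℝ (Icc a b) f) (hb : f b < 0)
    (hcI : c ∈ Ioo a b) (hc0 : f c = 0) : SignChangeAt f a b c := by
  have hc : c ∈ Icc a b := Ioo_subset_Icc_self hcI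
  have hb' : b ∈ Icc a b := ⟨hc.1.trans hc.2, le_rfl⟩
  refine ⟨hcI, hc0, fun t ht ↦ ?_, fun t ht ↦ ?_⟩
  · have h := hf.secant_mono_aux1 ⟨ht.1, ht.2.le.trans hc.2⟩ hb' ht.2 hcI.2
    rw [hc0, mul_zero] at h
    have hfb : (c - t) * f b < 0 := mul_neg_of_pos_of_neg (by linarith [ht.2]) hb
    exact pos_of_mul_pos_right (by linarith) (by linarith [hcI.2] : 0 ≤ b - c)
  · rcases ht.2.eq_or_lt with rfl | htb
    · exact hb
    · have h := hf.secant_mono_aux1 hc hb' ht.1 htb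
      rw [hc0, mul_zero, zero_add] at h
      have hfb : (t - c) * f b < 0 := mul_neg_of_pos_of_neg (by linarith [ht.1]) hb
      exact neg_of_mul_neg_right (by linarith) (by linarith [hcI.2] : 0 ≤ b - c)

theorem existsUnique_signChangeAt (hab : a ≤ b) (hf : ContinuousOn f (Icc a b)) (ha : 0 < f a)
    (hb : f b < 0) (hshape : ConvexOn ℝ (Icc a b) f ∨ StrictAntiOn f (Icc a b)) :
    ∃! c, SignChangeAt f a b c := by
  obtain ⟨c, hcI, hc0⟩ := intermediate_value_Ioo' hab hf ⟨hb, ha⟩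
  refine ⟨c, ?_, fun c' hc' ↦ hc'.unique ?_⟩ <;>
  · rcases hshape with hconv | hanti
    · exact signChangeAt_of_convexOn hconv hb hcI hc0
    · exact signChangeAt_of_strictAntiOn hanti hcI hc0

end SignChange

section Cubic

variable (A B C D : ℝ)

theorem hasDerivAt_cubic (t : ℝ) :
    HasDerivAt (fun t ↦ A * t ^ 3 + B * t ^ 2 + C * t + D) (3 * A * t ^ 2 + 2 * B * t + C) t := by
  have h : HasDerivAt (fun t ↦ A * t ^ 3 + B * t ^ 2 + C * t + D)
      (A * (↑(3 : ℕ) * t ^ (3 - 1)) + B * (↑(2 : ℕ) * t ^ (2 - 1)) + C * 1) t :=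
    ((((hasDerivAt_pow 3 t).const_mul A).add ((hasDerivAt_pow 2 t).const_mul B)).add
      ((hasDerivAt_id t).const_mul C)).add_const D
  exact h.congr_deriv (by norm_num; ring)

theorem hasDerivAt_quadratic (t : ℝ) :
    HasDerivAt (fun t ↦ 3 * A * t ^ 2 + 2 * B * t + C) (6 * A * t + 2 * B) t := by
  convert hasDerivAt_cubic 0 (3 * A) (2 * B) C t using 1
  · simp only [zero_mul, zero_add]
  · ring

variable {A B C D}

theorem strictAnti_cubic (hA : A < 0) (hdisc : B ^ 2 < 3 * A * C) :
    StrictAnti (fun t ↦ A * t ^ 3 + B * t ^ 2 + C * t + D) := by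
  refine strictAnti_of_deriv_neg fun t ↦ ?_
  rw [(hasDerivAt_cubic A B C D t).deriv]
  nlinarith [sq_nonneg (3 * A * t + B)]

theorem convexOn_Iic_cubic {r : ℝ} (hA : A ≤ 0) (hr : 0 ≤ 3 * A * r + B) :
    ConvexOn ℝ (Iic r) (fun t ↦ A * t ^ 3 + B * t ^ 2 + C * t + D) := by
  refine convexOn_of_hasDerivWithinAt2_nonneg (convex_Iic r)
    (fun t _ ↦ (hasDerivAt_cubic A B C D t).continuousAt.continuousWithinAt)
    (fun t _ ↦ (hasDerivAt_cubic A B C D t).hasDerivWithinAt)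
    (fun t _ ↦ (hasDerivAt_quadratic A B C t).hasDerivWithinAt) fun t ht ↦ ?_
  rw [interior_Iic] at ht
  nlinarith [mul_le_mul_of_nonpos_left (le_of_lt ht) hA]

end Cubic

theorem stmt_5 (p τ : ℝ) (hp1 : 1 < p) (hp2 : p < 2) (hτ : 0 < τ)
    (v : ℝ → ℝ)
    (hv : v = fun t => -(1+τ^2)^2*(p-1)*t^3 + (1+τ^2)*(3*τ^2+τ^2*p+3-3*p)*t^2
      + (2*τ^2*p-9*τ^4+τ^4*p+3-3*p-6*τ^2)*t - p + 5*τ^4 + 2*τ^2*p - τ^4*p - 10*τ^2 + 1) :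
    ∃! c : ℝ, c ∈ Set.Ioo (-1 : ℝ) 1 ∧ v c = 0 ∧
      (∀ t ∈ Set.Ico (-1 : ℝ) c, 0 < v t) ∧ (∀ t ∈ Set.Ioc c 1, v t < 0) := by
  have hv_neg_one : v (-1) = 16 * τ ^ 4 := by rw [hv]; ring
  have hv_one : v 1 = 8 * (1 - p - τ ^ 2) := by rw [hv]; ring
  set A := -(1 + τ ^ 2) ^ 2 * (p - 1)
  set B := (1 + τ ^ 2) * (3 * τ ^ 2 + τ ^ 2 * p + 3 - 3 * p)
  set C := 2 * τ ^ 2 * p - 9 * τ ^ 4 + τ ^ 4 * p + 3 - 3 * p - 6 * τ ^ 2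
  set D := -p + 5 * τ ^ 4 + 2 * τ ^ 2 * p - τ ^ 4 * p - 10 * τ ^ 2 + 1 with hD
  have hcubic : v = fun t ↦ A * t ^ 3 + B * t ^ 2 + C * t + D := by
    rw [hv, hD]; funext t; ring
  have hA_neg : A < 0 := mul_neg_of_neg_of_pos (neg_neg_of_pos (by positivity)) (by linarith)
  have hshape : ConvexOn ℝ (Icc (-1) 1) v ∨ StrictAntiOn v (Icc (-1) 1) := by
    rw [hcubic]
    rcases le_or_gt 0 (3 * A * 1 + B) with hconv | hanti
    · exact .inl <|
        (convexOn_Iic_cubic hA_neg.le hconv).subset Icc_subset_Iic_self (convex_Icc _ _)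
    · refine .inr <| (strictAnti_cubic hA_neg ?_).strictAntiOn _
      have hlin : (3 - p) * τ ^ 2 < 3 * (p - 1) := by
        have hsum : 3 * A * 1 + B = 2 * (1 + τ ^ 2) * ((3 - p) * τ ^ 2 - 3 * (p - 1)) := by ring
        exact sub_neg.1 (neg_of_mul_neg_right (hsum ▸ hanti) (by positivity))
      have hquad : τ ^ 2 * (3 - p) ^ 2 < 9 * (p - 1) := by nlinarith
      have hdisc : B ^ 2 - 3 * A * C =
          4 * τ ^ 2 * (1 + τ ^ 2) ^ 2 * (τ ^ 2 * (3 - p) ^ 2 - 9 * (p - 1)) := by ring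
      have := mul_neg_of_pos_of_neg (by positivity : 0 < 4 * τ ^ 2 * (1 + τ ^ 2) ^ 2)
        (sub_neg.2 hquad)
      linarith
  refine existsUnique_signChangeAt (by norm_num) ?_ ?_ ?_ hshape
  · rw [hcubic]; fun_prop
  · rw [hv_neg_one]; positivity
  · rw [hv_one]; nlinarith
end

section
/- Let 1<p<2, τ>0, g(t)=(1-t)^p, f(t)=((1+t)²+τ²(1-t)²)^{p/2}. Then for t∈(-1,1), the sign of the torsion expression f'''(t)g''(t) - g'''(t)f''(t) equals the sign of f'''(t) - ((2-p)/(1-t))·f''(t), and this equals the sign of the cubic v(t) defined in the paper. -/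
/-!
Since `g(t) = (1 - t) ^ p` has `g'' = p (p - 1) (1 - t) ^ (p - 2) > 0` and
`g''' = (2 - p) / (1 - t) * g''`, the torsion `f''' g'' - g''' f''` is `g''` times
`f''' - (2 - p) / (1 - t) * f''`. Writing `f = Q ^ (p / 2)` with the quadratic
`Q(t) = (1 + t) ^ 2 + τ ^ 2 (1 - t) ^ 2 > 0`, the derivatives of `f` are `Q ^ (p / 2 - 3)` times
polynomials in `t`, and the second expression is `2 p (2 - p) Q ^ (p / 2 - 3) / (1 - t) * v(t)`.
-/

open Real

lemma Real.sign_mul_of_pos {c : ℝ} (hc : 0 < c) (x : ℝ) : sign (c * x) = sign x := by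
  rcases lt_trichotomy x 0 with h | rfl | h
  · rw [sign_of_neg h, sign_of_neg (mul_neg_of_pos_of_neg hc h)]
  · simp
  · rw [sign_of_pos h, sign_of_pos (mul_pos hc h)]

lemma Real.sign_mul_sub_mul_of_eq_mul {a b c d r : ℝ} (hc : 0 < c) (hd : d = r * c) :
    sign (a * c - d * b) = sign (a - r * b) := by
  rw [hd, show a * c - r * c * b = c * (a - r * b) by ring, sign_mul_of_pos hc]

section OneSubRpow

lemma iteratedDeriv_one_sub_rpow (p : ℝ) (n : ℕ) :
    iteratedDeriv n (fun t : ℝ => (1 - t) ^ p)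
      = fun t => (-1) ^ n * (descPochhammer ℝ n).eval p * (1 - t) ^ (p - n) := by
  ext t
  simp only [iteratedDeriv_comp_const_sub n (fun x : ℝ => x ^ p), iteratedDeriv_eq_iterate,
    iter_deriv_rpow_const, smul_eq_mul, mul_assoc]

lemma iteratedDeriv_two_one_sub_rpow (p t : ℝ) :
    iteratedDeriv 2 (fun t : ℝ => (1 - t) ^ p) t = p * (p - 1) * (1 - t) ^ (p - 2) := by
  norm_num [iteratedDeriv_one_sub_rpow, descPochhammer_succ_right]

lemma iteratedDeriv_three_one_sub_rpow (p t : ℝ) :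
    iteratedDeriv 3 (fun t : ℝ => (1 - t) ^ p) t
      = -(p * (p - 1) * (p - 2)) * (1 - t) ^ (p - 3) := by
  norm_num [iteratedDeriv_one_sub_rpow, descPochhammer_succ_right]

variable {p t : ℝ}

lemma iteratedDeriv_two_one_sub_rpow_pos (hp : 1 < p) (ht : t < 1) :
    0 < iteratedDeriv 2 (fun t : ℝ => (1 - t) ^ p) t := by
  have := rpow_pos_of_pos (sub_pos.2 ht) (p - 2)
  have : 0 < p - 1 := by linarith
  rw [iteratedDeriv_two_one_sub_rpow]
  positivity

lemma iteratedDeriv_three_one_sub_rpow_eq_mul (ht : t < 1) :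
    iteratedDeriv 3 (fun t : ℝ => (1 - t) ^ p) t
      = (2 - p) / (1 - t) * iteratedDeriv 2 (fun t : ℝ => (1 - t) ^ p) t := by
  have h : 0 < 1 - t := by linarith
  rw [iteratedDeriv_three_one_sub_rpow, iteratedDeriv_two_one_sub_rpow,
    show p - 3 = p - 2 - 1 by ring, rpow_sub_one h.ne']
  field_simp
  ring

end OneSubRpow

section RpowOfQuadratic

variable {Q Q' : ℝ → ℝ} {c : ℝ} (α : ℝ)

lemma deriv_rpow_const_of_hasDerivAt (hQ : ∀ s, HasDerivAt Q (Q' s) s) (hQ0 : ∀ s, Q s ≠ 0) :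
    deriv (fun s => Q s ^ α) = fun s => α * Q s ^ (α - 1) * Q' s :=
  funext fun s => ((hQ s).rpow_const (Or.inl (hQ0 s))).deriv.trans (by ring)

lemma iteratedDeriv_two_rpow_const_of_quadratic (hQ : ∀ s, HasDerivAt Q (Q' s) s)
    (hQ' : ∀ s, HasDerivAt Q' c s) (hQ0 : ∀ s, Q s ≠ 0) :
    iteratedDeriv 2 (fun s => Q s ^ α)
      = fun s => α * (α - 1) * Q s ^ (α - 2) * Q' s ^ 2 + α * c * Q s ^ (α - 1) := by
  rw [iteratedDeriv_succ, iteratedDeriv_one, deriv_rpow_const_of_hasDerivAt α hQ hQ0]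
  refine funext fun s => HasDerivAt.deriv ?_
  refine ((((hQ s).rpow_const (Or.inl (hQ0 s))).const_mul α).mul (hQ' s)).congr_deriv ?_
  rw [show α - 1 - 1 = α - 2 by ring]
  ring

lemma iteratedDeriv_three_rpow_const_of_quadratic (hQ : ∀ s, HasDerivAt Q (Q' s) s)
    (hQ' : ∀ s, HasDerivAt Q' c s) (hQ0 : ∀ s, Q s ≠ 0) :
    iteratedDeriv 3 (fun s => Q s ^ α)
      = fun s => α * (α - 1) * (α - 2) * Q s ^ (α - 3) * Q' s ^ 3
          + 3 * α * (α - 1) * c * Q s ^ (α - 2) * Q' s := by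
  rw [iteratedDeriv_succ, iteratedDeriv_two_rpow_const_of_quadratic α hQ hQ' hQ0]
  refine funext fun s => HasDerivAt.deriv ?_
  have hpow (β : ℝ) := (hQ s).rpow_const (p := β) (Or.inl (hQ0 s))
  refine ((((hpow (α - 2)).const_mul (α * (α - 1))).mul ((hQ' s).pow 2)).add
    ((hpow (α - 1)).const_mul (α * c))).congr_deriv ?_
  rw [show α - 2 - 1 = α - 3 by ring, show α - 1 - 1 = α - 2 by ring]
  simp only [Pi.pow_apply]
  ring

end RpowOfQuadratic

section Torsion

variable {τ : ℝ}

lemma one_add_sq_add_mul_one_sub_sq_pos (hτ : τ ≠ 0) (s : ℝ) :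
    0 < (1 + s) ^ 2 + τ ^ 2 * (1 - s) ^ 2 := by
  rcases eq_or_ne s (-1) with rfl | hs
  · norm_num
    positivity
  · have : 1 + s ≠ 0 := fun h => hs (by linarith)
    positivity

lemma hasDerivAt_one_add_sq_add_mul_one_sub_sq (s : ℝ) :
    HasDerivAt (fun s => (1 + s) ^ 2 + τ ^ 2 * (1 - s) ^ 2)
      (2 * (1 + s) - 2 * τ ^ 2 * (1 - s)) s := by
  have h := (((hasDerivAt_id s).const_add 1).pow 2).add
    ((((hasDerivAt_id s).const_sub 1).pow 2).const_mul (τ ^ 2))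
  refine h.congr_deriv ?_
  simp only [id]
  ring

lemma hasDerivAt_two_mul_one_add_sub_mul_one_sub (s : ℝ) :
    HasDerivAt (fun s => 2 * (1 + s) - 2 * τ ^ 2 * (1 - s)) (2 + 2 * τ ^ 2) s := by
  have h := (((hasDerivAt_id s).const_add 1).const_mul 2).sub
    (((hasDerivAt_id s).const_sub 1).const_mul (2 * τ ^ 2))
  exact h.congr_deriv (by ring)

def torsionCubic (p τ t : ℝ) : ℝ :=
  -(1 + τ ^ 2) ^ 2 * (p - 1) * t ^ 3 + (1 + τ ^ 2) * (3 * τ ^ 2 + τ ^ 2 * p + 3 - 3 * p) * t ^ 2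
    + (2 * τ ^ 2 * p - 9 * τ ^ 4 + τ ^ 4 * p + 3 - 3 * p - 6 * τ ^ 2) * t
    - p + 5 * τ ^ 4 + 2 * τ ^ 2 * p - τ ^ 4 * p - 10 * τ ^ 2 + 1

lemma iteratedDeriv_three_sub_mul_iteratedDeriv_two_eq {p t : ℝ} (hτ : τ ≠ 0) (ht : t < 1) :
    iteratedDeriv 3 (fun t => ((1 + t) ^ 2 + τ ^ 2 * (1 - t) ^ 2) ^ (p / 2)) t
        - (2 - p) / (1 - t)
          * iteratedDeriv 2 (fun t => ((1 + t) ^ 2 + τ ^ 2 * (1 - t) ^ 2) ^ (p / 2)) t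
      = 2 * p * (2 - p) * ((1 + t) ^ 2 + τ ^ 2 * (1 - t) ^ 2) ^ (p / 2 - 3) / (1 - t)
          * torsionCubic p τ t := by
  have hQ0 (s : ℝ) := (one_add_sq_add_mul_one_sub_sq_pos hτ s).ne'
  rw [iteratedDeriv_three_rpow_const_of_quadratic (p / 2)
      hasDerivAt_one_add_sq_add_mul_one_sub_sq hasDerivAt_two_mul_one_add_sub_mul_one_sub hQ0,
    iteratedDeriv_two_rpow_const_of_quadratic (p / 2)
      hasDerivAt_one_add_sq_add_mul_one_sub_sq hasDerivAt_two_mul_one_add_sub_mul_one_sub hQ0]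
  beta_reduce
  have hQ := one_add_sq_add_mul_one_sub_sq_pos hτ t
  have h1 : 1 - t ≠ 0 := by linarith
  rw [show p / 2 - 1 = p / 2 - 3 + 2 by ring, show p / 2 - 2 = p / 2 - 3 + 1 by ring,
    rpow_add hQ, rpow_add hQ, rpow_one, rpow_two, torsionCubic]
  field_simp
  ring

end Torsion

theorem stmt_7 (p τ : ℝ) (hp1 : 1 < p) (hp2 : p < 2) (hτ : 0 < τ)
    (g f v : ℝ → ℝ)
    (hg : g = fun t => (1-t) ^ p)
    (hf : f = fun t => ((1+t)^2 + τ^2*(1-t)^2) ^ (p/2))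
    (hv : v = fun t => -(1+τ^2)^2*(p-1)*t^3 + (1+τ^2)*(3*τ^2+τ^2*p+3-3*p)*t^2
      + (2*τ^2*p-9*τ^4+τ^4*p+3-3*p-6*τ^2)*t - p + 5*τ^4 + 2*τ^2*p - τ^4*p - 10*τ^2 + 1) :
    ∀ t ∈ Set.Ioo (-1 : ℝ) 1,
      Real.sign (iteratedDeriv 3 f t * iteratedDeriv 2 g t
          - iteratedDeriv 3 g t * iteratedDeriv 2 f t)
        = Real.sign (iteratedDeriv 3 f t - ((2-p)/(1-t)) * iteratedDeriv 2 f t) ∧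
      Real.sign (iteratedDeriv 3 f t - ((2-p)/(1-t)) * iteratedDeriv 2 f t)
        = Real.sign (v t) := by
  subst hg hf hv
  rintro t ⟨-, ht⟩
  refine ⟨sign_mul_sub_mul_of_eq_mul (iteratedDeriv_two_one_sub_rpow_pos hp1 ht)
    (iteratedDeriv_three_one_sub_rpow_eq_mul ht), ?_⟩
  have hQ := one_add_sq_add_mul_one_sub_sq_pos hτ.ne' t
  have : 0 < 2 - p := by linarith
  have : 0 < 1 - t := by linarith
  rw [iteratedDeriv_three_sub_mul_iteratedDeriv_two_eq hτ.ne' ht, sign_mul_of_pos (by positivity)]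
  rfl
end

section
/- Let I ⊂ ℝ be an interval, g, f ∈ C³(I) with g''>0 on I, and suppose the curve v(s)=(g'(s),f'(s)) is strictly convex on (a₀,c) and strictly concave on (c,b₀) for some c ∈ (a₀,b₀) ⊂ I. Then for every P with 0<P<min{c-a₀, b₀-c} there exist a ∈ (a₀,c) and b = a+P ∈ (c,b₀) such that the determinant of the 3×3 matrix with rows (1, 1, a-b), (g'(a), g'(b), g(a)-g(b)), (f'(a), f'(b), f(a)-f(b)) is zero. -/
/-!
Write `x = g'`, `y = f'` and `v = (x, y)`, so `x' = g'' > 0`. Positive torsion on `(a, b)` means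
that the slope `y'/x' = f''/g''` of `v` is strictly increasing there, so on `(a, b)` the curve
stays strictly on one side of its chord `[v a, v b]`: the cross product of `v b - v a` with
`v t - v a` is negative. That cross product is the derivative of
`H t = (x b - x a)(f t - y a · t) - (y b - y a)(g t - x a · t)`,
and the determinant equals `H a - H b > 0`. With negative torsion the sign flips, so
`a ↦ det(a, a + P)` is positive at `a = c - P`, negative at `a = c`, and vanishes in between.
-/

open Set

noncomputable def cupDet (f g : ℝ → ℝ) (a b : ℝ) : ℝ :=
  Matrix.det !![(1 : ℝ), 1, a - b;
                deriv g a, deriv g b, g a - g b;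
                deriv f a, deriv f b, f a - f b]

lemma cupDet_eq (f g : ℝ → ℝ) (a b : ℝ) :
    cupDet f g a b = (deriv g b - deriv g a) * (f a - f b) - (deriv f b - deriv f a) * (g a - g b)
      + (a - b) * (deriv g a * deriv f b - deriv g b * deriv f a) := by
  simp only [cupDet, Matrix.det_fin_three, Matrix.of_apply, Matrix.cons_val', Matrix.cons_val_zero,
    Matrix.cons_val_one, Matrix.cons_val_two, Matrix.empty_val', Matrix.cons_val_fin_one,
    Matrix.head_cons, Matrix.tail_cons, Matrix.head_fin_const]
  ring

lemma cupDet_neg_left (f g : ℝ → ℝ) (a b : ℝ) :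
    cupDet (fun x => -f x) g a b = -cupDet f g a b := by
  simp only [cupDet_eq, deriv.fun_neg']
  ring

lemma strictMonoOn_div_of_wronskian_pos {u v : ℝ → ℝ} {a b : ℝ}
    (hu : Differentiable ℝ u) (hv : Differentiable ℝ v) (hv_pos : ∀ s ∈ Icc a b, 0 < v s)
    (hw : ∀ s ∈ Ioo a b, 0 < deriv u s * v s - deriv v s * u s) :
    StrictMonoOn (fun s => u s / v s) (Icc a b) := by
  refine strictMonoOn_of_deriv_pos (convex_Icc a b)
    (hu.continuous.continuousOn.div hv.continuous.continuousOn fun s hs => (hv_pos s hs).ne')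
    fun s hs => ?_
  rw [interior_Icc] at hs
  have hvs := hv_pos s (Ioo_subset_Icc_self hs)
  rw [((hu s).hasDerivAt.fun_div (hv s).hasDerivAt hvs.ne').deriv]
  exact div_pos (by linarith [hw s hs]) (pow_pos hvs 2)

lemma neg_on_Ioo_of_deriv_sign_increasing {h : ℝ → ℝ} {a b : ℝ} (hh : Differentiable ℝ h)
    (ha : h a = 0) (hb : h b = 0)
    (hsign : ∀ ξ₁ ∈ Ioo a b, ∀ ξ₂ ∈ Ioo a b, ξ₁ < ξ₂ → 0 ≤ deriv h ξ₁ → 0 < deriv h ξ₂) :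
    ∀ t ∈ Ioo a b, h t < 0 := by
  intro t ht
  by_contra! hnonneg
  obtain ⟨ξ₁, hξ₁, hslope₁⟩ :=
    exists_deriv_eq_slope h ht.1 hh.continuous.continuousOn hh.differentiableOn
  obtain ⟨ξ₂, hξ₂, hslope₂⟩ :=
    exists_deriv_eq_slope h ht.2 hh.continuous.continuousOn hh.differentiableOn
  have hup : 0 ≤ deriv h ξ₁ := by
    rw [hslope₁, ha]
    exact div_nonneg (by linarith) (by linarith [ht.1])
  have hdown : deriv h ξ₂ ≤ 0 := by
    rw [hslope₂, hb]
    exact div_nonpos_of_nonpos_of_nonneg (by linarith) (by linarith [ht.2])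
  have := hsign ξ₁ ⟨hξ₁.1, hξ₁.2.trans ht.2⟩ ξ₂ ⟨ht.1.trans hξ₂.1, hξ₂.2⟩
    (hξ₁.2.trans hξ₂.1) hup
  linarith

lemma chord_cross_neg {x y : ℝ → ℝ} {a b : ℝ} (hab : a < b)
    (hx : Differentiable ℝ x) (hy : Differentiable ℝ y) (hx' : ∀ s ∈ Icc a b, 0 < deriv x s)
    (hslope : StrictMonoOn (fun s => deriv y s / deriv x s) (Icc a b)) :
    ∀ t ∈ Ioo a b, (x b - x a) * (y t - y a) - (y b - y a) * (x t - x a) < 0 := by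
  have hA : 0 < x b - x a :=
    sub_pos.2 (strictMonoOn_of_deriv_pos (convex_Icc a b) hx.continuous.continuousOn
      (fun s hs => hx' s (interior_subset hs)) (left_mem_Icc.2 hab.le) (right_mem_Icc.2 hab.le) hab)
  have hderiv : ∀ t, HasDerivAt (fun t => (x b - x a) * (y t - y a) - (y b - y a) * (x t - x a))
      ((x b - x a) * deriv y t - (y b - y a) * deriv x t) t := fun t =>
    (((hy t).hasDerivAt.sub_const _).const_mul _).sub (((hx t).hasDerivAt.sub_const _).const_mul _)
  refine neg_on_Ioo_of_deriv_sign_increasing (fun t => (hderiv t).differentiableAt)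
    (by ring) (by ring) fun ξ₁ hξ₁ ξ₂ hξ₂ hlt hup => ?_
  rw [(hderiv ξ₁).deriv] at hup
  rw [(hderiv ξ₂).deriv]
  have hx₁ := hx' ξ₁ (Ioo_subset_Icc_self hξ₁)
  have hx₂ := hx' ξ₂ (Ioo_subset_Icc_self hξ₂)
  have hcross : deriv y ξ₁ * deriv x ξ₂ < deriv y ξ₂ * deriv x ξ₁ := by
    rw [← div_lt_div_iff₀ hx₁ hx₂]
    exact hslope (Ioo_subset_Icc_self hξ₁) (Ioo_subset_Icc_self hξ₂) hlt
  nlinarith [mul_le_mul_of_nonneg_right hup hx₂.le, mul_lt_mul_of_pos_left hcross hA]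

lemma cupDet_pos {f g : ℝ → ℝ} {a b : ℝ} (hab : a < b) (hf : ContDiff ℝ 3 f)
    (hg : ContDiff ℝ 3 g) (hg'' : ∀ s ∈ Icc a b, 0 < iteratedDeriv 2 g s)
    (htor : ∀ s ∈ Ioo a b, 0 < iteratedDeriv 3 f s * iteratedDeriv 2 g s
      - iteratedDeriv 3 g s * iteratedDeriv 2 f s) :
    0 < cupDet f g a b := by
  have hslope := strictMonoOn_div_of_wronskian_pos (hf.differentiable_iteratedDeriv 2 (by norm_num))
    (hg.differentiable_iteratedDeriv 2 (by norm_num)) hg'' fun s hs => by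
      simpa only [← iteratedDeriv_succ] using htor s hs
  have h2 : ∀ φ : ℝ → ℝ, iteratedDeriv 2 φ = deriv (deriv φ) := fun φ => by
    rw [iteratedDeriv_succ, iteratedDeriv_one]
  simp only [h2] at hg'' hslope
  have hf' := hf.differentiable (by norm_num)
  have hg' := hg.differentiable (by norm_num)
  have hcross := chord_cross_neg hab (hg.of_le (by norm_num)).differentiable_deriv_two
    (hf.of_le (by norm_num)).differentiable_deriv_two hg'' hslope
  set x := deriv g
  set y := deriv f
  set H : ℝ → ℝ := fun t => (x b - x a) * (f t - y a * t) - (y b - y a) * (g t - x a * t)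
  have hH : ∀ t, HasDerivAt H ((x b - x a) * (y t - y a) - (y b - y a) * (x t - x a)) t :=
    fun t => ((((hf' t).hasDerivAt.sub ((hasDerivAt_id' t).const_mul (y a))).const_mul
      (x b - x a)).sub (((hg' t).hasDerivAt.sub ((hasDerivAt_id' t).const_mul (x a))).const_mul
      (y b - y a))).congr_deriv (by ring)
  have hanti : StrictAntiOn H (Icc a b) :=
    strictAntiOn_of_deriv_neg (convex_Icc a b) (fun t _ => (hH t).continuousAt.continuousWithinAt)
      fun t ht => by
        rw [(hH t).deriv]
        exact hcross t (by rwa [interior_Icc] at ht)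
  have := hanti (left_mem_Icc.2 hab.le) (right_mem_Icc.2 hab.le) hab
  rw [cupDet_eq]
  simp only [H] at this
  linarith

lemma cupDet_neg {f g : ℝ → ℝ} {a b : ℝ} (hab : a < b) (hf : ContDiff ℝ 3 f)
    (hg : ContDiff ℝ 3 g) (hg'' : ∀ s ∈ Icc a b, 0 < iteratedDeriv 2 g s)
    (htor : ∀ s ∈ Ioo a b, iteratedDeriv 3 f s * iteratedDeriv 2 g s
      - iteratedDeriv 3 g s * iteratedDeriv 2 f s < 0) :
    cupDet f g a b < 0 := by
  have := cupDet_pos hab hf.neg hg hg'' fun s hs => by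
    simp only [iteratedDeriv_fun_neg]
    linarith [htor s hs]
  rw [cupDet_neg_left] at this
  linarith

theorem stmt_8_general (f g : ℝ → ℝ) (a₀ b₀ c : ℝ)
    (hf : ContDiff ℝ 3 f) (hg : ContDiff ℝ 3 g)
    (hg'' : ∀ s ∈ Set.Icc a₀ b₀, 0 < iteratedDeriv 2 g s)
    (hconv : ∀ s ∈ Set.Ioo a₀ c,
      0 < iteratedDeriv 3 f s * iteratedDeriv 2 g s - iteratedDeriv 3 g s * iteratedDeriv 2 f s)
    (hconc : ∀ s ∈ Set.Ioo c b₀,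
      iteratedDeriv 3 f s * iteratedDeriv 2 g s - iteratedDeriv 3 g s * iteratedDeriv 2 f s < 0) :
    ∀ P : ℝ, 0 < P → P < min (c - a₀) (b₀ - c) →
      ∃ a : ℝ, a ∈ Set.Ioo a₀ c ∧ a + P ∈ Set.Ioo c b₀ ∧
        Matrix.det !![(1 : ℝ), 1, a - (a+P);
                      deriv g a, deriv g (a+P), g a - g (a+P);
                      deriv f a, deriv f (a+P), f a - f (a+P)] = 0 := by
  intro P hP hPmin
  have hPc : P < c - a₀ := hPmin.trans_le (min_le_left _ _)
  have hPb : P < b₀ - c := hPmin.trans_le (min_le_right _ _)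
  have hcont : Continuous fun a => cupDet f g a (a + P) := by
    have hf₀ := hf.continuous
    have hg₀ := hg.continuous
    have hf₁ := hf.continuous_deriv (by norm_num)
    have hg₁ := hg.continuous_deriv (by norm_num)
    simp only [cupDet_eq]
    fun_prop
  have hpos : 0 < cupDet f g (c - P) (c - P + P) :=
    cupDet_pos (by linarith) hf hg (fun s hs => hg'' s ⟨by linarith [hs.1], by linarith [hs.2]⟩)
      fun s hs => hconv s ⟨by linarith [hs.1], by linarith [hs.2]⟩
  have hneg : cupDet f g c (c + P) < 0 :=
    cupDet_neg (by linarith) hf hg (fun s hs => hg'' s ⟨by linarith [hs.1], by linarith [hs.2]⟩)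
      fun s hs => hconc s ⟨hs.1, by linarith [hs.2]⟩
  obtain ⟨a, ha, hzero⟩ :=
    intermediate_value_Ioo' (by linarith : c - P ≤ c) hcont.continuousOn ⟨hneg, hpos⟩
  exact ⟨a, ⟨by linarith [ha.1], ha.2⟩, ⟨by linarith [ha.1], by linarith [ha.2]⟩, hzero⟩

theorem stmt_8 (f g : ℝ → ℝ) (a₀ b₀ c : ℝ) (hac : a₀ < c) (hcb : c < b₀)
    (hf : ContDiff ℝ 3 f) (hg : ContDiff ℝ 3 g)
    (hg'' : ∀ s ∈ Set.Icc a₀ b₀, 0 < iteratedDeriv 2 g s)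
    (hconv : ∀ s ∈ Set.Ioo a₀ c,
      0 < iteratedDeriv 3 f s * iteratedDeriv 2 g s - iteratedDeriv 3 g s * iteratedDeriv 2 f s)
    (hconc : ∀ s ∈ Set.Ioo c b₀,
      iteratedDeriv 3 f s * iteratedDeriv 2 g s - iteratedDeriv 3 g s * iteratedDeriv 2 f s < 0) :
    ∀ P : ℝ, 0 < P → P < min (c - a₀) (b₀ - c) →
      ∃ a : ℝ, a ∈ Set.Ioo a₀ c ∧ a + P ∈ Set.Ioo c b₀ ∧
        Matrix.det !![(1 : ℝ), 1, a - (a+P);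
                      deriv g a, deriv g (a+P), g a - g (a+P);
                      deriv f a, deriv f (a+P), f a - f (a+P)] = 0 :=
  stmt_8_general f g a₀ b₀ c hf hg hg'' hconv hconc
end

section
/- Let 1<p<2, τ real, and define u(z) = τ^p(p-1)(τ²+z²)^{(2-p)/2} − τ²(p-1) + (1+z)^{2-p} − z(2-p) − 1. If |τ| ≤ 0.5 then u(1/(p-1)) ≤ 0. -/
/-!
Put `q = p - 1` and `a = q|τ|`. Since `τ ^ p ≤ |τ| ^ p`, multiplying `u (1/q)` by `q` reduces
the claim to
  `a ^ (1+q) (1+a²) ^ ((1-q)/2) - a² + q ^ q (1+q) ^ (1-q) ≤ 1`   for `0 ≤ a ≤ q/2`.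
The term `q ^ q (1+q) ^ (1-q)` is convex in `q ∈ [0,1]`, because its logarithm
`q log q + (1-q) log (1+q)` has a monotone derivative, and it equals `1` at both ends; its chords
through `q = 1/4` bound it by `1 - 0.652 q` on `[0, 1/4]` and by `1 - 0.217 (1-q)` on `[1/4, 1]`.
The rest, `a ^ (1+q) (1+a²) ^ ((1-q)/2) - a²`, is at most `a ≤ q/2`, and also, by Bernoulli's
inequality, the convexity of `exp` and `a ^ q ≤ a ^ (2a)`, at most
`(1-q) exp (a³ - 1) / 2 ≤ 0.215 (1-q)`.
-/

open Real Set

theorem exp_sub_exp_le_mul_exp (b c : ℝ) : exp b - exp c ≤ (b - c) * exp b := by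
  have h := add_one_le_exp (c - b)
  have hc : exp c = exp (c - b) * exp b := by rw [← exp_add, sub_add_cancel]
  nlinarith [exp_pos b]

theorem sub_mul_exp_le_exp_sub_one (c y : ℝ) : (c - y) * exp y ≤ exp (c - 1) := by
  have h := add_one_le_exp (c - y - 1)
  have hy : exp (c - 1) = exp (c - y - 1) * exp y := by rw [← exp_add]; ring_nf
  nlinarith [exp_pos y]

theorem rpow_one_add_mul_rpow_sub_sq_le_self {q a : ℝ} (hq : 0 ≤ q) (ha0 : 0 ≤ a)
    (ha1 : a ≤ 1) :
    a ^ (1 + q) * (1 + a ^ 2) ^ ((1 - q) / 2) - a ^ 2 ≤ a := by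
  have h1 : a ^ (1 + q) ≤ a := by
    simpa using rpow_le_rpow_of_exponent_ge' ha0 ha1 zero_le_one (by linarith : 1 ≤ 1 + q)
  have h2 : (1 + a ^ 2) ^ ((1 - q) / 2) ≤ 1 + a ^ 2 :=
    rpow_le_self_of_one_le (by nlinarith) (by linarith)
  calc a ^ (1 + q) * (1 + a ^ 2) ^ ((1 - q) / 2) - a ^ 2 ≤ a * (1 + a ^ 2) - a ^ 2 := by
        gcongr
    _ ≤ a := by nlinarith

theorem rpow_one_add_mul_rpow_sub_sq_le {q a : ℝ} (hq : q ≤ 1) (ha : 0 ≤ a)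
    (haq : 2 * a ≤ q) :
    a ^ (1 + q) * (1 + a ^ 2) ^ ((1 - q) / 2) - a ^ 2 ≤ (1 - q) * exp (a ^ 3 - 1) / 2 := by
  obtain rfl | ha := ha.eq_or_lt
  · rw [zero_rpow (by linarith)]
    norm_num
    exact div_nonneg (mul_nonneg (by linarith) (exp_pos _).le) zero_le_two
  have ha1 : a ≤ 1 := by linarith
  have hlog : log a ≤ 0 := log_nonpos ha.le ha1
  have hbernoulli : (1 + a ^ 2) ^ ((1 - q) / 2) ≤ 1 + (1 - q) / 2 * a ^ 2 :=
    rpow_one_add_le_one_add_mul_self (by nlinarith) (by linarith) (by linarith)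
  have hsub : a ^ (1 + q) - a ^ 2 ≤ (1 - q) * -log a * a ^ (1 + q) := by
    rw [show a ^ 2 = exp (log a * 2) by rw [← rpow_def_of_pos ha, rpow_two], rpow_def_of_pos ha]
    convert exp_sub_exp_le_mul_exp (log a * (1 + q)) (log a * 2) using 1
    ring
  have hexponent : a ^ (1 + q) ≤ a * exp (2 * a * log a) := by
    calc a ^ (1 + q) ≤ a ^ (1 + 2 * a) := rpow_le_rpow_of_exponent_ge ha ha1 (by linarith)
      _ = a * exp (2 * a * log a) := by rw [rpow_add ha, rpow_one, rpow_def_of_pos ha]; ring_nf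
  calc a ^ (1 + q) * (1 + a ^ 2) ^ ((1 - q) / 2) - a ^ 2
      ≤ a ^ (1 + q) * (1 + (1 - q) / 2 * a ^ 2) - a ^ 2 := by gcongr
    _ ≤ (1 - q) * a ^ (1 + q) * (-log a + a ^ 2 / 2) := by nlinarith
    _ ≤ (1 - q) * (a * exp (2 * a * log a)) * (-log a + a ^ 2 / 2) := by
        gcongr
        nlinarith
    _ = (1 - q) * ((a ^ 3 - 2 * a * log a) * exp (2 * a * log a)) / 2 := by ring
    _ ≤ (1 - q) * exp (a ^ 3 - 1) / 2 := by
        gcongr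
        exact sub_mul_exp_le_exp_sub_one _ _

theorem convexOn_mul_log_add_one_sub_mul_log_one_add :
    ConvexOn ℝ (Icc 0 1) fun q : ℝ => q * log q + (1 - q) * log (1 + q) := by
  have hderiv : ∀ q ∈ Ioo (0 : ℝ) 1,
      HasDerivAt (fun q : ℝ => q * log q + (1 - q) * log (1 + q))
        (log q + 1 - log (1 + q) + (1 - q) / (1 + q)) q := by
    intro q hq
    have h1 : HasDerivAt (fun q : ℝ => 1 + q) 1 q := (hasDerivAt_id' q).const_add 1
    have h2 : HasDerivAt (fun q : ℝ => (1 - q) * log (1 + q))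
        (-1 * log (1 + q) + (1 - q) * (1 / (1 + q))) q :=
      ((hasDerivAt_id' q).const_sub 1).mul (h1.log (by linarith [hq.1]))
    refine ((hasDerivAt_mul_log hq.1.ne').add h2).congr_deriv ?_
    ring
  refine MonotoneOn.convexOn_of_deriv (convex_Icc 0 1) ?_ ?_ ?_
  · refine continuous_mul_log.continuousOn.add (ContinuousOn.mul (by fun_prop) ?_)
    exact ContinuousOn.log (by fun_prop) fun x hx => by linarith [hx.1]
  · rw [interior_Icc]
    exact fun q hq => (hderiv q hq).differentiableAt.differentiableWithinAt
  · rw [interior_Icc]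
    rintro x ⟨hx0, hx1⟩ y ⟨hy0, hy1⟩ hxy
    rw [(hderiv x ⟨hx0, hx1⟩).deriv, (hderiv y ⟨hy0, hy1⟩).deriv]
    -- `log (y(1+x) / (x(1+y))) ≥ (y-x) / (y(1+x)) ≥ 2(y-x) / ((1+x)(1+y))`, as `y ≤ 1`
    have hlog := one_sub_inv_le_log_of_pos (show 0 < y * (1 + x) / (x * (1 + y)) by positivity)
    rw [log_div (by positivity) (by positivity), log_mul (by positivity) (by positivity),
      log_mul (by positivity) (by positivity), inv_div] at hlog
    have halg : (1 - x) / (1 + x) - (1 - y) / (1 + y) ≤ 1 - x * (1 + y) / (y * (1 + x)) := by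
      rw [div_sub_div _ _ (by positivity) (by positivity), one_sub_div (by positivity),
        div_le_div_iff₀ (by positivity) (by positivity)]
      nlinarith [mul_pos hx0 hy0, mul_nonneg (sub_nonneg.2 hxy) (sub_nonneg.2 hy1.le),
        mul_nonneg (mul_nonneg (sub_nonneg.2 hxy) (sub_nonneg.2 hy1.le)) (mul_pos hx0 hy0).le]
    linarith

theorem rpow_self_mul_one_add_rpow_eq_exp {q : ℝ} (hq : 0 ≤ q) :
    q ^ q * (1 + q) ^ (1 - q) = exp (q * log q + (1 - q) * log (1 + q)) := by
  obtain rfl | hq := hq.eq_or_lt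
  · simp
  rw [rpow_def_of_pos hq, rpow_def_of_pos (by linarith), ← exp_add]
  ring_nf

theorem convexOn_rpow_self_mul_one_add_rpow :
    ConvexOn ℝ (Icc 0 1) fun q : ℝ => q ^ q * (1 + q) ^ (1 - q) := by
  have hlog := convexOn_mul_log_add_one_sub_mul_log_one_add
  set g : ℝ → ℝ := fun q => q * log q + (1 - q) * log (1 + q)
  have heq : ∀ q ∈ Icc (0 : ℝ) 1, q ^ q * (1 + q) ^ (1 - q) = exp (g q) :=
    fun q hq => rpow_self_mul_one_add_rpow_eq_exp hq.1
  refine ⟨convex_Icc 0 1, fun x hx y hy θ η hθ hη hθη => ?_⟩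
  simp only [smul_eq_mul]
  rw [heq _ (by simpa using convex_Icc 0 1 hx hy hθ hη hθη), heq x hx, heq y hy]
  calc exp (g (θ * x + η * y)) ≤ exp (θ * g x + η * g y) :=
        exp_le_exp.2 (by simpa using hlog.2 hx hy hθ hη hθη)
    _ ≤ θ * exp (g x) + η * exp (g y) := by
        simpa using convexOn_exp.2 (mem_univ (g x)) (mem_univ (g y)) hθ hη hθη

theorem rpow_self_mul_one_add_rpow_quarter_le :
    (1 / 4 : ℝ) ^ (1 / 4 : ℝ) * (1 + 1 / 4) ^ (1 - 1 / 4 : ℝ) ≤ 0.837 := by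
  refine le_of_pow_le_pow_left₀ four_ne_zero (by norm_num) ?_
  rw [mul_pow, ← rpow_natCast, ← rpow_natCast, ← rpow_mul (by norm_num),
    ← rpow_mul (by norm_num)]
  norm_num

theorem rpow_self_mul_one_add_rpow_le_of_le_quarter {q : ℝ} (hq0 : 0 ≤ q) (hq : q ≤ 1 / 4) :
    q ^ q * (1 + q) ^ (1 - q) ≤ 1 - 0.652 * q := by
  have hconv := convexOn_rpow_self_mul_one_add_rpow.2
  have hchord := hconv (x := 0) (y := 1 / 4) (by norm_num) (by norm_num)
    (a := 1 - 4 * q) (b := 4 * q) (by linarith) (by linarith) (by ring)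
  rw [smul_eq_mul, smul_eq_mul, mul_zero, zero_add, show 4 * q * (1 / 4) = q by ring] at hchord
  norm_num at hchord
  nlinarith [rpow_self_mul_one_add_rpow_quarter_le]

theorem rpow_self_mul_one_add_rpow_le_of_quarter_le {q : ℝ} (hq : 1 / 4 ≤ q) (hq1 : q ≤ 1) :
    q ^ q * (1 + q) ^ (1 - q) ≤ 1 - 0.217 * (1 - q) := by
  have hconv := convexOn_rpow_self_mul_one_add_rpow.2
  have hchord := hconv (x := 1 / 4) (y := 1) (by norm_num) (by norm_num)
    (a := 4 * (1 - q) / 3) (b := 1 - 4 * (1 - q) / 3) (by linarith) (by linarith) (by ring)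
  rw [smul_eq_mul, smul_eq_mul,
    show 4 * (1 - q) / 3 * (1 / 4) + (1 - 4 * (1 - q) / 3) * 1 = q by ring] at hchord
  norm_num at hchord
  nlinarith [rpow_self_mul_one_add_rpow_quarter_le]

theorem exp_neg_seven_eighths_lt : exp (-(7 / 8)) < 0.43 := by
  have h := quadratic_le_exp_of_nonneg (x := 7 / 16) (by norm_num)
  have hsq : exp (7 / 8) = exp (7 / 16) ^ 2 := by rw [← exp_nat_mul]; norm_num
  rw [exp_neg, inv_lt_comm₀ (exp_pos _) (by norm_num), hsq]
  nlinarith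

theorem rpow_one_add_mul_rpow_sub_sq_add_rpow_self_mul_le_one {q a : ℝ} (hq : q ≤ 1)
    (ha : 0 ≤ a) (haq : 2 * a ≤ q) :
    a ^ (1 + q) * (1 + a ^ 2) ^ ((1 - q) / 2) - a ^ 2 + q ^ q * (1 + q) ^ (1 - q) ≤ 1 := by
  rcases le_total q (1 / 4) with hq4 | hq4
  · have hfirst := rpow_one_add_mul_rpow_sub_sq_le_self (q := q) (by linarith) ha (by linarith)
    linarith [rpow_self_mul_one_add_rpow_le_of_le_quarter (by linarith) hq4]
  · have hexp : exp (a ^ 3 - 1) ≤ 0.43 := by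
      refine (exp_le_exp.2 ?_).trans exp_neg_seven_eighths_lt.le
      nlinarith [pow_le_pow_left₀ ha (by linarith : a ≤ 1 / 2) 3]
    have hfirst := rpow_one_add_mul_rpow_sub_sq_le hq ha haq
    nlinarith [rpow_self_mul_one_add_rpow_le_of_quarter_le hq4 hq]

theorem mul_one_add_inv_rpow {q : ℝ} (hq : 0 < q) (r : ℝ) :
    q * (1 + q⁻¹) ^ r = q ^ (1 - r) * (1 + q) ^ r := by
  rw [show 1 + q⁻¹ = (1 + q) / q by field_simp; ring, div_rpow (by positivity) hq.le,
    rpow_sub hq, rpow_one]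
  field_simp

theorem sq_mul_rpow_mul_rpow_eq {q t : ℝ} (hq : 0 < q) (ht : 0 ≤ t) :
    q ^ 2 * (t ^ (1 + q) * (t ^ 2 + q⁻¹ ^ 2) ^ ((1 - q) / 2)) =
      (q * t) ^ (1 + q) * (1 + (q * t) ^ 2) ^ ((1 - q) / 2) := by
  have hsq : 1 + (q * t) ^ 2 = q ^ 2 * (t ^ 2 + q⁻¹ ^ 2) := by field_simp; ring
  have hpow : (q ^ 2) ^ ((1 - q) / 2) = q ^ (1 - q) := by
    rw [← rpow_natCast, ← rpow_mul hq.le]; norm_num; ring_nf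
  rw [hsq, mul_rpow hq.le ht, mul_rpow (by positivity) (by positivity), hpow]
  have hq2 : q ^ (1 + q) * q ^ (1 - q) = q ^ 2 := by
    rw [← rpow_add hq, ← rpow_natCast]; norm_num
  linear_combination (t ^ (1 + q) * (t ^ 2 + q⁻¹ ^ 2) ^ ((1 - q) / 2)) * hq2.symm

theorem stmt_12 (p τ : ℝ) (hp1 : 1 < p) (hp2 : p < 2) (hτ : |τ| ≤ 0.5)
    (u : ℝ → ℝ)
    (hu : u = fun z => τ ^ p * (p-1) * (τ^2 + z^2) ^ ((2-p)/2)
      - τ^2*(p-1) + (1+z) ^ (2-p) - z*(2-p) - 1) :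
    u (1/(p-1)) ≤ 0 := by
  subst hu
  obtain ⟨q, rfl⟩ : ∃ q, p = 1 + q := ⟨p - 1, by ring⟩
  have hq0 : 0 < q := by linarith
  rw [show 2 - (1 + q) = 1 - q by ring, add_sub_cancel_left, one_div, ← sq_abs τ]
  have hkey := rpow_one_add_mul_rpow_sub_sq_add_rpow_self_mul_le_one (q := q) (a := q * |τ|)
    (by linarith) (by positivity) (by norm_num at hτ; nlinarith)
  have habs : τ ^ (1 + q) ≤ |τ| ^ (1 + q) := (le_abs_self _).trans (abs_rpow_le_abs_rpow _ _)
  have hscale := sq_mul_rpow_mul_rpow_eq hq0 (abs_nonneg τ)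
  have hsecond := mul_one_add_inv_rpow hq0 (1 - q)
  rw [sub_sub_cancel] at hsecond
  refine nonpos_of_mul_nonpos_right ?_ hq0
  have hM : 0 ≤ q ^ 2 * (|τ| ^ 2 + q⁻¹ ^ 2) ^ ((1 - q) / 2) := by positivity
  have hqinv : q * q⁻¹ = 1 := mul_inv_cancel₀ hq0.ne'
  nlinarith [mul_le_mul_of_nonneg_right habs hM]
end

section
/- Let 1<p<2, τ>0, g(t)=(1-t)^p, f(t)=((1+t)²+τ²(1-t)²)^{p/2}, y_p=-1+2/p, and let s₀ ∈ (y_p, 1) satisfy the cup equation det[(1,1,-1-s₀);(g'(-1),g'(s₀),g(-1)-g(s₀));(f'(-1),f'(s₀),f(-1)-f(s₀))]=0 (rows as listed with a=-1, b=s₀). Then (f(s₀) − (s₀−y_p)f'(s₀))/(g(s₀) − (s₀−y_p)g'(s₀)) = (f'(-1) − f'(s₀))/(g'(-1) − g'(s₀)). -/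
/-!
Write `T_h(b) = h b - (b - y) h'(b)` for the value at `y` of the tangent line to `h` at `b`.
Expanding the cup determinant along its first row shows that, once the tangent lines of `g` and `f`
at `-1` both pass through `(y_p, 0)`, it vanishes exactly when
`T_f(s₀) (g'(-1) - g'(s₀)) = T_g(s₀) (f'(-1) - f'(s₀))`.
Both tangencies hold because `g` and `f` are `p`-th and `p/2`-th powers of functions whose
logarithmic derivative at `-1` is `-1/2`, resp. `-1`.
-/

theorem tangent_ratio_eq_of_det_eq_zero {a b y Ga Gb dGa dGb Fa Fb dFa dFb : ℝ}
    (hdet : Matrix.det !![(1 : ℝ), 1, a - b; dGa, dGb, Ga - Gb; dFa, dFb, Fa - Fb] = 0)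
    (hG : Ga = (a - y) * dGa) (hF : Fa = (a - y) * dFa)
    (hGb : Gb - (b - y) * dGb ≠ 0) (hdG : dGa ≠ dGb) :
    (Fb - (b - y) * dFb) / (Gb - (b - y) * dGb) = (dFa - dFb) / (dGa - dGb) := by
  rw [div_eq_div_iff hGb (sub_ne_zero.mpr hdG)]
  simp only [Matrix.det_fin_three, Matrix.of_apply, Matrix.cons_val', Matrix.cons_val_zero,
    Matrix.cons_val_one, Matrix.cons_val_two, Matrix.head_cons, Matrix.tail_cons,
    Matrix.empty_val', Matrix.cons_val_fin_one, Matrix.head_fin_const] at hdet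
  subst hG hF
  linear_combination hdet

theorem mul_deriv_rpow_eq {u : ℝ → ℝ} {u' a : ℝ} (q : ℝ) (hu : HasDerivAt u u' a)
    (ha : u a ≠ 0) : u a * deriv (fun t => u t ^ q) a = q * u' * u a ^ q := by
  rw [(hu.rpow_const (Or.inl ha)).deriv, Real.rpow_sub_one ha]
  field_simp

theorem rpow_eq_sub_mul_deriv_rpow {u : ℝ → ℝ} {u' a q y : ℝ} (hu : HasDerivAt u u' a)
    (ha : u a ≠ 0) (hy : q * u' * (a - y) = u a) :
    u a ^ q = (a - y) * deriv (fun t => u t ^ q) a := by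
  apply mul_left_cancel₀ ha
  linear_combination -(a - y) * mul_deriv_rpow_eq q hu ha - u a ^ q * hy

theorem stmt_19_general (p τ : ℝ) (hp1 : 1 < p) (hτ : 0 < τ)
    (g f : ℝ → ℝ)
    (hg : g = fun t => (1-t) ^ p)
    (hf : f = fun t => ((1+t)^2 + τ^2*(1-t)^2) ^ (p/2))
    (s₀ : ℝ)
    (hcup : Matrix.det !![(1 : ℝ), 1, -1 - s₀;
                          deriv g (-1), deriv g s₀, g (-1) - g s₀;
                          deriv f (-1), deriv f s₀, f (-1) - f s₀] = 0)
    (hden1 : g s₀ - (s₀ - (-1 + 2/p)) * deriv g s₀ ≠ 0)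
    (hden2 : deriv g (-1) ≠ deriv g s₀) :
    (f s₀ - (s₀ - (-1 + 2/p)) * deriv f s₀) / (g s₀ - (s₀ - (-1 + 2/p)) * deriv g s₀)
      = (deriv f (-1) - deriv f s₀) / (deriv g (-1) - deriv g s₀) := by
  have hp : p ≠ 0 := by positivity
  have hg_tangent : g (-1) = (-1 - (-1 + 2/p)) * deriv g (-1) := by
    subst hg
    refine rpow_eq_sub_mul_deriv_rpow (u' := -1) ((hasDerivAt_id _).const_sub 1) (by norm_num) ?_
    field_simp
    ring
  have hf_tangent : f (-1) = (-1 - (-1 + 2/p)) * deriv f (-1) := by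
    subst hf
    have hu : HasDerivAt (fun t : ℝ => (1+t)^2 + τ^2*(1-t)^2) (-(4*τ^2)) (-1) := by
      refine ((((hasDerivAt_id' (-1 : ℝ)).const_add 1).fun_pow 2).fun_add
        ((((hasDerivAt_id' (-1 : ℝ)).const_sub 1).fun_pow 2).const_mul (τ^2))).congr_deriv ?_
      norm_num
      ring
    refine rpow_eq_sub_mul_deriv_rpow hu (by positivity) ?_
    field_simp
    ring
  exact tangent_ratio_eq_of_det_eq_zero hcup hg_tangent hf_tangent hden1 hden2

theorem stmt_19 (p τ : ℝ) (hp1 : 1 < p) (hp2 : p < 2) (hτ : 0 < τ)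
    (g f : ℝ → ℝ)
    (hg : g = fun t => (1-t) ^ p)
    (hf : f = fun t => ((1+t)^2 + τ^2*(1-t)^2) ^ (p/2))
    (s₀ : ℝ) (hs₀ : s₀ ∈ Set.Ioo (-1 + 2/p) 1)
    (hcup : Matrix.det !![(1 : ℝ), 1, -1 - s₀;
                          deriv g (-1), deriv g s₀, g (-1) - g s₀;
                          deriv f (-1), deriv f s₀, f (-1) - f s₀] = 0)
    (hden1 : g s₀ - (s₀ - (-1 + 2/p)) * deriv g s₀ ≠ 0)
    (hden2 : deriv g (-1) ≠ deriv g s₀) :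
    (f s₀ - (s₀ - (-1 + 2/p)) * deriv f s₀) / (g s₀ - (s₀ - (-1 + 2/p)) * deriv g s₀)
      = (deriv f (-1) - deriv f s₀) / (deriv g (-1) - deriv g s₀) :=
  stmt_19_general p τ hp1 hτ g f hg hf s₀ hcup hden1 hden2
end
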